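/- For any real x and real a > 0, one has |x|^a · sgn(x) = (Γ(a+1)/(2πi)) ∫_{1+iℝ} (e^{zx} − e^{-zx})/z^{a+1} dz, where the contour runs from 1-i∞ to 1+i∞ and z^{a+1} is the principal branch. -/

import Mathlib

/-!
Let `g(u) = u ^ a e^{-u}` for `u > 0` and `g(u) = 0` otherwise. Its Fourier transform is the Laplace
integral `∫₀^∞ u ^ a e^{-bu} du = Γ(a+1) / b ^ (a+1)` at `b = 1 + 2πiξ`; that formula holds for real
`b > 0` and extends to `Re b > 0` by the identity theorem, both sides being holomorphic there. For
`a > 0` the transform decays like `|ξ| ^ (-(a+1))`, so Fourier inversion applies at every `y ≠ 0`.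
After the substitution `t = 2πξ` and multiplication by `e^y` it reads
`∫ e^{(1+it)y} (1+it)^{-(a+1)} dt = 2π y₊ ^ a / Γ(a+1)`, and subtracting the same identity at `-y`
turns `y₊ ^ a` into the odd function `|y| ^ a sgn y`.
-/

open Complex MeasureTheory Real Set Filter Topology FourierTransform

section LaplaceTransform

variable {s : ℂ}

lemma norm_cpow_mul_cexp_neg_mul {u : ℝ} (hu : 0 < u) (b : ℂ) :
    ‖(u : ℂ) ^ s * cexp (-(b * u))‖ = u ^ s.re * Real.exp (-(b.re * u)) := by
  rw [norm_mul, norm_cpow_eq_rpow_re_of_pos hu, Complex.norm_exp]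
  simp

lemma aestronglyMeasurable_cpow_mul_cexp_neg_mul (b : ℂ) (μ : Measure ℝ) :
    AEStronglyMeasurable (fun u : ℝ => (u : ℂ) ^ s * cexp (-(b * u))) μ :=
  (by fun_prop : Measurable fun u : ℝ => (u : ℂ) ^ s * cexp (-(b * u))).aestronglyMeasurable

lemma integrableOn_cpow_mul_cexp_neg_mul (hs : -1 < s.re) {b : ℂ} (hb : 0 < b.re) :
    IntegrableOn (fun u : ℝ => (u : ℂ) ^ s * cexp (-(b * u))) (Ioi 0) := by
  refine (integrableOn_rpow_mul_exp_neg_mul_rpow hs zero_lt_one hb).mono'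
    (aestronglyMeasurable_cpow_mul_cexp_neg_mul b _) ?_
  filter_upwards [ae_restrict_mem measurableSet_Ioi] with u hu
  rw [norm_cpow_mul_cexp_neg_mul hu, rpow_one, neg_mul]

lemma differentiableOn_integral_cpow_mul_cexp_neg_mul (hs : -1 < s.re) :
    DifferentiableOn ℂ (fun b : ℂ => ∫ u in Ioi (0 : ℝ), (u : ℂ) ^ s * cexp (-(b * u)))
      {b | 0 < b.re} := by
  intro b (hb : 0 < b.re)
  refine (hasDerivAt_integral_of_dominated_loc_of_deriv_le
    (F := fun b (u : ℝ) => (u : ℂ) ^ s * cexp (-(b * u)))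
    (F' := fun b (u : ℝ) => (u : ℂ) ^ s * (cexp (-(b * u)) * -u))
    (bound := fun u => u ^ (s.re + 1) * Real.exp (-(b.re / 2 * u)))
    (Metric.ball_mem_nhds b (half_pos hb))
    (.of_forall fun b' => aestronglyMeasurable_cpow_mul_cexp_neg_mul b' _)
    (integrableOn_cpow_mul_cexp_neg_mul hs hb) ?_ ?_ ?_ ?_).2.differentiableAt
    |>.differentiableWithinAt
  · exact (by fun_prop : Measurable fun u : ℝ => (u : ℂ) ^ s * (cexp (-(b * u)) * -u))
      |>.aestronglyMeasurable
  · filter_upwards [ae_restrict_mem measurableSet_Ioi] with u (hu : 0 < u) b' hb'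
    have hre : b.re / 2 ≤ b'.re := by
      have := (abs_re_le_norm (b' - b)).trans (mem_ball_iff_norm.mp hb').le
      rw [sub_re, abs_le] at this
      linarith
    rw [← mul_assoc, norm_mul, norm_cpow_mul_cexp_neg_mul hu, norm_neg, norm_real,
      norm_of_nonneg hu.le, rpow_add_one hu.ne']
    calc u ^ s.re * Real.exp (-(b'.re * u)) * u = u ^ s.re * u * Real.exp (-(b'.re * u)) := by
          ring
      _ ≤ u ^ s.re * u * Real.exp (-(b.re / 2 * u)) := by gcongr
  · have := integrableOn_rpow_mul_exp_neg_mul_rpow (s := s.re + 1) (by linarith) zero_lt_one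
      (half_pos hb)
    simp only [rpow_one, neg_mul] at this
    exact this
  · filter_upwards with u b' _
    exact ((hasDerivAt_mul_const (u : ℂ)).neg.cexp).const_mul _

theorem integral_cpow_mul_cexp_neg_mul_Ioi_of_re_pos (hs : -1 < s.re) {b : ℂ} (hb : 0 < b.re) :
    ∫ u in Ioi (0 : ℝ), (u : ℂ) ^ s * cexp (-(b * u)) = Gamma (s + 1) / b ^ (s + 1) := by
  have hU : IsOpen {b : ℂ | 0 < b.re} := isOpen_lt continuous_const continuous_re
  have hrhs : DifferentiableOn ℂ (fun b : ℂ => Gamma (s + 1) / b ^ (s + 1)) {b | 0 < b.re} :=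
    fun b (hb : 0 < b.re) => (differentiableAt_const _).div
      (differentiableAt_id.cpow_const (.inl hb)) (by simp [cpow_eq_zero_iff, ne_zero_of_re_pos hb])
      |>.differentiableWithinAt
  have hreal : ∀ r : ℝ, 0 < r →
      ∫ u in Ioi (0 : ℝ), (u : ℂ) ^ s * cexp (-(r * u)) = Gamma (s + 1) / (r : ℂ) ^ (s + 1) := by
    intro r hr
    have := integral_cpow_mul_exp_neg_mul_Ioi (a := s + 1) (by simp; linarith) hr
    rwa [add_sub_cancel_right, one_div,
      inv_cpow _ _ (by simp [arg_ofReal_of_nonneg hr.le, pi_ne_zero.symm]), mul_comm,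
      ← div_eq_mul_inv] at this
  have hfreq : ∃ᶠ z in 𝓝[≠] (1 : ℂ),
      ∫ u in Ioi (0 : ℝ), (u : ℂ) ^ s * cexp (-(z * u)) = Gamma (s + 1) / z ^ (s + 1) :=
    (continuous_ofReal.continuousWithinAt.tendsto_nhdsWithin (s := {(1 : ℝ)}ᶜ)
      fun r hr => by simpa using hr).frequently
      ((eventually_nhdsWithin_of_eventually_nhds (lt_mem_nhds one_pos)).frequently.mono hreal)
  exact ((differentiableOn_integral_cpow_mul_cexp_neg_mul hs).analyticOnNhd hU)
    |>.eqOn_of_preconnected_of_frequently_eq (hrhs.analyticOnNhd hU)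
      (convex_halfSpace_re_gt 0).isPreconnected (by simp) hfreq hb

end LaplaceTransform

noncomputable def gammaKernel (a : ℝ) : ℝ → ℂ :=
  (Ioi 0).indicator fun u => (u : ℂ) ^ (a : ℂ) * cexp (-u)

lemma integrable_gammaKernel {a : ℝ} (ha : -1 < a) : Integrable (gammaKernel a) := by
  have := integrableOn_cpow_mul_cexp_neg_mul (s := a) (b := 1) (by simpa) (by simp)
  simp only [one_mul] at this
  exact this.integrable_indicator measurableSet_Ioi

lemma continuousAt_gammaKernel (a : ℝ) {y : ℝ} (hy : y ≠ 0) : ContinuousAt (gammaKernel a) y := by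
  rcases hy.lt_or_gt with hy | hy
  · have hIoi : Ioi (0 : ℝ) =ᶠ[𝓝 y] (∅ : Set ℝ) :=
      eventuallyEq_empty.2 <| mem_of_superset (Iic_mem_nhds hy)
        fun u (hu : u ≤ 0) => (not_lt.2 hu : ¬ 0 < u)
    refine ContinuousAt.congr ?_ (indicator_eventuallyEq .rfl hIoi).symm
    rw [indicator_empty]
    exact continuousAt_const
  · have hIoi : Ioi (0 : ℝ) =ᶠ[𝓝 y] univ := eventuallyEq_univ.2 (Ioi_mem_nhds hy)
    refine ContinuousAt.congr ?_ (indicator_eventuallyEq .rfl hIoi).symm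
    rw [indicator_univ]
    exact (continuousAt_ofReal_cpow_const y _ (.inr hy.ne')).mul (by fun_prop)

lemma fourier_gammaKernel {a : ℝ} (ha : -1 < a) (ξ : ℝ) :
    𝓕 (gammaKernel a) ξ = Complex.Gamma (a + 1) / (1 + (2 * π * ξ : ℝ) * I) ^ ((a : ℂ) + 1) := by
  rw [← integral_cpow_mul_cexp_neg_mul_Ioi_of_re_pos (by simpa) (by simp), Real.fourier_eq',
    ← integral_indicator measurableSet_Ioi]
  congr 1 with v
  rw [gammaKernel, smul_eq_mul]
  by_cases hv : v ∈ Ioi 0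
  · rw [indicator_of_mem hv, indicator_of_mem hv, mul_left_comm, ← Complex.exp_add,
      real_inner_comm, RCLike.inner_apply, conj_trivial]
    push_cast
    ring_nf
  · rw [indicator_of_notMem hv, indicator_of_notMem hv, mul_zero]

lemma norm_one_add_mul_I_cpow (t p : ℝ) : ‖(1 + t * I) ^ (p : ℂ)‖ = (1 + t ^ 2) ^ (p / 2) := by
  rw [norm_cpow_real, ← ofReal_one, norm_add_mul_I, one_pow, sqrt_eq_rpow,
    ← rpow_mul (by positivity), one_div_mul_eq_div]

lemma integrable_inv_one_add_mul_I_cpow {p : ℝ} (hp : 1 < p) :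
    Integrable fun t : ℝ => ((1 + t * I) ^ (p : ℂ))⁻¹ := by
  refine (integrable_rpow_neg_one_add_norm_sq (r := p) (by simpa)).mono'
    (by fun_prop : Measurable fun t : ℝ => ((1 + t * I) ^ (p : ℂ))⁻¹).aestronglyMeasurable ?_
  filter_upwards with t
  rw [norm_inv, norm_one_add_mul_I_cpow, Real.norm_eq_abs, sq_abs, neg_div,
    rpow_neg (by positivity)]

lemma integrable_fourier_gammaKernel {a : ℝ} (ha : 0 < a) : Integrable (𝓕 (gammaKernel a)) := by
  refine (((integrable_inv_one_add_mul_I_cpow (p := a + 1) (by linarith)).comp_mul_left'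
    two_pi_pos.ne').const_mul (Complex.Gamma (a + 1))).congr (.of_forall fun ξ => ?_)
  rw [fourier_gammaKernel (by linarith), div_eq_mul_inv]
  push_cast
  rfl

lemma integral_cexp_mul_I_div_one_add_mul_I_cpow {a y : ℝ} (ha : 0 < a) (hy : y ≠ 0) :
    ∫ t : ℝ, cexp (t * y * I) / (1 + t * I) ^ ((a : ℂ) + 1) =
      2 * π * gammaKernel a y / Complex.Gamma (a + 1) := by
  set f : ℝ → ℂ := fun t => cexp (t * y * I) / (1 + t * I) ^ ((a : ℂ) + 1)
  have hinv := (integrable_gammaKernel (by linarith)).fourierInv_fourier_eq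
    (integrable_fourier_gammaKernel ha) (continuousAt_gammaKernel a hy)
  have hsubst : ∫ ξ : ℝ, f (2 * π * ξ) = (2 * π : ℂ)⁻¹ * ∫ t, f t := by
    rw [Measure.integral_comp_mul_left, abs_of_pos (inv_pos.2 two_pi_pos), real_smul]
    push_cast
    rfl
  have hΓ : Complex.Gamma (a + 1) ≠ 0 := Gamma_ne_zero_of_re_pos (by simp; linarith)
  rw [Real.fourierInv_eq'] at hinv
  simp_rw [fourier_gammaKernel (by linarith : -1 < a)] at hinv
  have hpointwise (ξ : ℝ) : cexp (↑(2 * π * inner ℝ ξ y) * I) •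
      (Complex.Gamma (a + 1) / (1 + ↑(2 * π * ξ) * I) ^ ((a : ℂ) + 1)) =
      Complex.Gamma (a + 1) * f (2 * π * ξ) := by
    simp only [f, smul_eq_mul, RCLike.inner_apply, conj_trivial]
    push_cast
    ring_nf
  rw [integral_congr_ae (.of_forall hpointwise), integral_const_mul, hsubst] at hinv
  rw [← hinv]
  field_simp

lemma integrable_cexp_mul_div_one_add_mul_I_cpow {a : ℝ} (ha : 0 < a) (y : ℝ) :
    Integrable fun t : ℝ => cexp ((1 + t * I) * y) / (1 + t * I) ^ ((a : ℂ) + 1) := by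
  have hinv := integrable_inv_one_add_mul_I_cpow (p := a + 1) (by linarith)
  push_cast at hinv
  have hmeas : Measurable fun t : ℝ => cexp ((1 + t * I) * y) / (1 + t * I) ^ ((a : ℂ) + 1) := by
    fun_prop
  refine (hinv.norm.const_mul (Real.exp y)).mono' hmeas.aestronglyMeasurable
    (.of_forall fun t => le_of_eq ?_)
  rw [div_eq_mul_inv, norm_mul, Complex.norm_exp]
  simp

lemma integral_cexp_mul_div_one_add_mul_I_cpow {a y : ℝ} (ha : 0 < a) (hy : y ≠ 0) :
    ∫ t : ℝ, cexp ((1 + t * I) * y) / (1 + t * I) ^ ((a : ℂ) + 1) =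
      2 * π * ((Ioi 0).indicator (· ^ a) y : ℝ) / Real.Gamma (a + 1) := by
  have hsplit (t : ℝ) : cexp ((1 + t * I) * y) / (1 + t * I) ^ ((a : ℂ) + 1) =
      cexp y * (cexp (t * y * I) / (1 + t * I) ^ ((a : ℂ) + 1)) := by
    rw [← mul_div_assoc, ← Complex.exp_add]
    ring_nf
  have hkernel : cexp y * gammaKernel a y = ((Ioi 0).indicator (· ^ a) y : ℝ) := by
    by_cases hy : y ∈ Ioi 0
    · rw [gammaKernel, indicator_of_mem hy, indicator_of_mem hy, ofReal_cpow (le_of_lt hy),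
        mul_left_comm, ← Complex.exp_add, add_neg_cancel, Complex.exp_zero, mul_one]
    · rw [gammaKernel, indicator_of_notMem hy, indicator_of_notMem hy, mul_zero, ofReal_zero]
  simp_rw [hsplit]
  rw [integral_const_mul, integral_cexp_mul_I_div_one_add_mul_I_cpow ha hy, ← hkernel,
    ← ofReal_one, ← ofReal_add, Complex.Gamma_ofReal]
  ring

lemma indicator_rpow_sub_indicator_rpow_neg (a x : ℝ) :
    (Ioi 0).indicator (· ^ a) x - (Ioi 0).indicator (· ^ a) (-x) = |x| ^ a * Real.sign x := by
  rcases lt_trichotomy x 0 with hx | rfl | hx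
  · simp [hx, hx.not_gt, abs_of_neg hx, Real.sign_of_neg hx]
  · simp
  · simp [hx, hx.not_gt, abs_of_pos hx, Real.sign_of_pos hx]

/-- For any real `x` and `a > 0`,
`|x|^a · sgn(x) = (Γ(a+1)/(2πi)) ∫_{1+iℝ} (e^{zx} − e^{-zx})/z^{a+1} dz`,
with `z = 1 + i t`, `dz = i dt`, and the principal branch of `z^(a+1)`. -/
theorem abs_rpow_sign_eq_contour_integral (x a : ℝ) (ha : 0 < a) :
    ((|x| ^ a * Real.sign x : ℝ) : ℂ) =
      (Real.Gamma (a + 1) : ℂ) / (2 * Real.pi * Complex.I) *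
        ∫ t : ℝ,
          (Complex.exp ((1 + t * Complex.I) * x) - Complex.exp (-((1 + t * Complex.I) * x))) /
              (1 + t * Complex.I) ^ ((a : ℂ) + 1) * Complex.I := by
  rcases eq_or_ne x 0 with rfl | hx
  · simp
  have hneg (t : ℝ) : -((1 + t * I) * x) = (1 + t * I) * (-x : ℝ) := by push_cast; ring
  simp_rw [hneg, sub_div]
  rw [integral_mul_const, integral_sub (integrable_cexp_mul_div_one_add_mul_I_cpow ha x)
      (integrable_cexp_mul_div_one_add_mul_I_cpow ha (-x)),
    integral_cexp_mul_div_one_add_mul_I_cpow ha hx,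
    integral_cexp_mul_div_one_add_mul_I_cpow ha (neg_ne_zero.2 hx),
    ← indicator_rpow_sub_indicator_rpow_neg]
  have hΓ : (Real.Gamma (a + 1) : ℂ) ≠ 0 :=
    ofReal_ne_zero.2 (Real.Gamma_pos_of_pos (by linarith)).ne'
  field_simp
  push_cast
  ring
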